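/- arXiv:math/0401181 — 5 statements merged into one kernel-verified Lean document; each statement's English description precedes it below -/
import Mathlib

section
/- Let V ⊂ \bar{F}_q be a finite-dimensional F_q-subspace, and let f(τ) ∈ \bar{F}_q{τ} be a separable skew polynomial (nonzero constant coefficient) with ker φ_f = V. Then f can be chosen with coefficients in F_{q^d} if and only if the q^d-power Frobenius x ↦ x^{q^d} maps V bijectively onto itself. -/
/-!
The map `x ↦ x ^ q ^ d` is the Frobenius of `F_{q^d}`, an `F_{q^d}`-algebra endomorphism of
`\bar{F}_q`. If `φ_f` has coefficients in `F_{q^d}`, the Frobenius therefore maps its finite root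
set `V` injectively into itself. Conversely, a separable `φ_f` with root set `V` is, after
normalizing it to be monic, the product of `X - v` over `v ∈ V`; a Frobenius that permutes `V`
permutes these factors, so it fixes every coefficient, and the fixed points of the Frobenius are
exactly `F_{q^d}`.
-/

open Polynomial

theorem FiniteField.mem_range_algebraMap_of_pow_card_eq {F K : Type*} [Field F] [Fintype F]
    [CommRing K] [IsDomain K] [Algebra F K] {x : K} (hx : x ^ Fintype.card F = x) :
    x ∈ (algebraMap F K).range := by
  have hsplit : (X ^ Fintype.card F - X : F[X]).Splits := by
    simpa using (FiniteField.isSplittingField_sub F F).splits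
  exact hsplit.mem_range_of_isRoot (X_pow_card_sub_X_ne_zero F Fintype.one_lt_card) (by simp [hx])

namespace Polynomial

theorem bijOn_rootSet {F K : Type*} [Field F] [Field K] [Algebra F K] (p : F[X])
    (φ : K →ₐ[F] K) : Set.BijOn φ (p.rootSet K) (p.rootSet K) :=
  ((p.rootSet_finite K).injOn_iff_bijOn_of_mapsTo (rootSet_mapsTo φ)).mp φ.injective.injOn

theorem setOf_isRoot_mul_C {R : Type*} [CommRing R] [IsDomain R] (g : R[X]) {c : R} (hc : c ≠ 0) :
    {x | (g * C c).IsRoot x} = {x | g.IsRoot x} := by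
  simp [IsRoot, hc]

theorem map_eq_self_of_bijOn_roots {K : Type*} [Field K] (φ : K →+* K) {g : K[X]}
    (hmon : g.Monic) (hsep : g.Separable) (hsplit : g.Splits)
    (hφ : Set.BijOn φ {x | g.IsRoot x} {x | g.IsRoot x}) : g.map φ = g := by
  have hroots : (g.map φ).roots = g.roots := by
    rw [hsplit.roots_map]
    refine ((nodup_roots hsep).map φ.injective).ext (nodup_roots hsep) |>.mpr fun x => ?_
    simp only [Multiset.mem_map, mem_roots hsep.ne_zero]
    exact ⟨fun ⟨y, hy, hyx⟩ => hyx ▸ hφ.mapsTo hy, fun hx => hφ.surjOn hx⟩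
  rw [(hsplit.map φ).eq_prod_roots_of_monic (hmon.map φ), hroots,
    ← hsplit.eq_prod_roots_of_monic hmon]

end Polynomial

section LinearizedPoly

variable {R : Type*} [CommSemiring R] (q n : ℕ) (b : ℕ → R)

/-- `φ_f` for the skew polynomial `f = ∑_{i ≤ n} b i τ^i`. -/
noncomputable def linearizedPoly : R[X] := ∑ i ∈ Finset.range (n + 1), C (b i) * X ^ q ^ i

@[simp]
theorem eval_linearizedPoly (x : R) :
    (linearizedPoly q n b).eval x = ∑ i ∈ Finset.range (n + 1), b i * x ^ q ^ i := by
  simp [linearizedPoly, eval_finsetSum]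

@[simp]
theorem aeval_linearizedPoly {A : Type*} [CommSemiring A] [Algebra R A] (x : A) :
    aeval x (linearizedPoly q n b) =
      ∑ i ∈ Finset.range (n + 1), algebraMap R A (b i) * x ^ q ^ i := by
  simp [linearizedPoly]

theorem map_linearizedPoly {S : Type*} [CommSemiring S] (f : R →+* S) :
    (linearizedPoly q n b).map f = linearizedPoly q n (f ∘ b) := by
  simp [linearizedPoly, Polynomial.map_sum]

theorem linearizedPoly_mul_C (c : R) :
    linearizedPoly q n b * C c = linearizedPoly q n (b · * c) := by
  simp only [linearizedPoly, Finset.sum_mul, C_mul]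
  exact Finset.sum_congr rfl fun i _ => by ring

variable {q n b}

theorem linearizedPoly_congr {b' : ℕ → R} (h : ∀ i ≤ n, b i = b' i) :
    linearizedPoly q n b = linearizedPoly q n b' :=
  Finset.sum_congr rfl fun i hi => by rw [h i (Finset.mem_range_succ_iff.mp hi)]

theorem coeff_linearizedPoly_pow (hq : 1 < q) {i : ℕ} (hi : i ≤ n) :
    (linearizedPoly q n b).coeff (q ^ i) = b i := by
  rw [linearizedPoly, finsetSum_coeff, Finset.sum_eq_single i]
  · simp
  · intro j _ hji
    rw [coeff_C_mul, coeff_X_pow, if_neg ((Nat.pow_right_injective hq).ne hji.symm), mul_zero]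
  · simp [hi]

theorem linearizedPoly_ne_zero (hq : 1 < q) (hb : b 0 ≠ 0) : linearizedPoly q n b ≠ 0 :=
  fun h => hb (by rw [← coeff_linearizedPoly_pow (b := b) hq n.zero_le, h, coeff_zero])

theorem derivative_linearizedPoly (hq : (q : R) = 0) :
    derivative (linearizedPoly q n b) = C (b 0) := by
  rw [linearizedPoly, derivative_sum, Finset.sum_eq_single 0]
  · simp
  · intro i _ hi
    rw [derivative_C_mul_X_pow, Nat.cast_pow, hq, zero_pow hi, mul_zero, C_0, zero_mul]
  · simp

theorem separable_linearizedPoly {K : Type*} [Field K] {b : ℕ → K} (hq : (q : K) = 0)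
    (hb : b 0 ≠ 0) : (linearizedPoly q n b).Separable := by
  rw [separable_def, derivative_linearizedPoly hq]
  exact ⟨0, C (b 0)⁻¹, by simp [← C_mul, hb]⟩

theorem rootSet_linearizedPoly {F K : Type*} [Field F] [Field K] [Algebra F K] {a : ℕ → F}
    (hq : 1 < q) (ha : a 0 ≠ 0) :
    (linearizedPoly q n a).rootSet K =
      {x | ∑ i ∈ Finset.range (n + 1), algebraMap F K (a i) * x ^ q ^ i = 0} := by
  ext x
  rw [mem_rootSet_of_ne (linearizedPoly_ne_zero hq ha), aeval_linearizedPoly, Set.mem_ofPred_eq]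

end LinearizedPoly

theorem FiniteField.exists_rootSet_linearizedPoly_eq_of_bijOn_frobenius {F K : Type*} [Field F]
    [Fintype F] [Field K] [Algebra F K] {q n : ℕ} (hq : 1 < q) {b : ℕ → K} (hb : b 0 ≠ 0)
    (hsep : (linearizedPoly q n b).Separable) (hsplit : (linearizedPoly q n b).Splits)
    (hbij : Set.BijOn (frobeniusAlgHom F K) {x | (linearizedPoly q n b).IsRoot x}
      {x | (linearizedPoly q n b).IsRoot x}) :
    ∃ a : ℕ → F, a 0 ≠ 0 ∧
      (linearizedPoly q n a).rootSet K = {x | (linearizedPoly q n b).IsRoot x} := by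
  set g := linearizedPoly q n b
  set u := g.leadingCoeff⁻¹
  have hu : u ≠ 0 := inv_ne_zero (leadingCoeff_ne_zero.mpr hsep.ne_zero)
  have hroots : {x | (g * C u).IsRoot x} = {x | g.IsRoot x} := setOf_isRoot_mul_C g hu
  have hfixed : (g * C u).map (frobeniusAlgHom F K) = g * C u :=
    map_eq_self_of_bijOn_roots _ (monic_mul_leadingCoeff_inv hsep.ne_zero)
      (hsep.mul_unit (isUnit_C.mpr hu.isUnit)) (hsplit.mul (Splits.C _)) (hroots ▸ hbij)
  have hcoeff (i : ℕ) : ∃ a : F, algebraMap F K a = (g * C u).coeff (q ^ i) :=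
    mem_range_algebraMap_of_pow_card_eq <| by
      have h := congrArg (coeff · (q ^ i)) hfixed
      rwa [coeff_map] at h
  choose a ha using hcoeff
  have ha' (i : ℕ) (hi : i ≤ n) : algebraMap F K (a i) = b i * u := by
    rw [ha, linearizedPoly_mul_C, coeff_linearizedPoly_pow hq hi]
  have hlift : (linearizedPoly q n a).map (algebraMap F K) = g * C u := by
    rw [map_linearizedPoly, linearizedPoly_mul_C]
    exact linearizedPoly_congr ha'
  have ha0 : a 0 ≠ 0 := fun h0 => mul_ne_zero hb hu (by rw [← ha' 0 n.zero_le, h0, map_zero])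
  refine ⟨a, ha0, ?_⟩
  ext x
  rw [← hroots, mem_rootSet_of_ne (linearizedPoly_ne_zero hq ha0), ← hlift,
    Set.mem_ofPred_eq, IsRoot.def, eval_map_algebraMap]

theorem separable_skew_poly_coeffs_in_Fqd_iff_frobenius_invariant_general
    (Fq Fqd : Type) [Field Fq] [Fintype Fq] [Field Fqd] [Fintype Fqd] [Algebra Fq Fqd]
    (q d : ℕ) (hq : q = Fintype.card Fq) (hqd : Fintype.card Fqd = q ^ d)
    (V : Submodule Fq (AlgebraicClosure Fqd))
    (hker : ∃ (n : ℕ) (b : ℕ → AlgebraicClosure Fqd), b 0 ≠ 0 ∧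
      (V : Set (AlgebraicClosure Fqd)) =
        {x | ∑ i ∈ Finset.range (n + 1), b i * x ^ q ^ i = 0}) :
    (∃ (n : ℕ) (a : ℕ → Fqd), a 0 ≠ 0 ∧
        (V : Set (AlgebraicClosure Fqd)) =
          {x | ∑ i ∈ Finset.range (n + 1),
            algebraMap Fqd (AlgebraicClosure Fqd) (a i) * x ^ q ^ i = 0}) ↔
      Set.BijOn (fun x : AlgebraicClosure Fqd => x ^ q ^ d)
        (V : Set (AlgebraicClosure Fqd)) (V : Set (AlgebraicClosure Fqd)) := by
  set K := AlgebraicClosure Fqd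
  have hq1 : 1 < q := hq ▸ Fintype.one_lt_card
  have hfrob : (fun x : K => x ^ q ^ d) = FiniteField.frobeniusAlgHom Fqd K := by
    rw [FiniteField.coe_frobeniusAlgHom, hqd]
  rw [hfrob]
  constructor
  · rintro ⟨m, a, ha0, hA⟩
    rw [hA, ← rootSet_linearizedPoly hq1 ha0]
    exact bijOn_rootSet _ _
  · intro hbij
    obtain ⟨n, b, hb0, hV⟩ := hker
    have hqK : (q : K) = 0 := by
      rw [hq, ← map_natCast (algebraMap Fq K), FiniteField.cast_card_eq_zero, map_zero]
    replace hV : (V : Set K) = {x | (linearizedPoly q n b).IsRoot x} := by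
      simpa only [IsRoot.def, eval_linearizedPoly] using hV
    rw [hV] at hbij ⊢
    obtain ⟨a, ha0, ha⟩ := FiniteField.exists_rootSet_linearizedPoly_eq_of_bijOn_frobenius hq1 hb0
      (separable_linearizedPoly hqK hb0) (IsAlgClosed.splits _) hbij
    exact ⟨n, a, ha0, by rw [← ha, rootSet_linearizedPoly hq1 ha0]⟩

/-- Let `V ⊂ \bar{F}_q` be a finite-dimensional `F_q`-subspace which is the kernel
of some separable skew polynomial (a separable additive polynomial, i.e. one with nonzero
constant coefficient).  Then such a skew polynomial `f` with `ker φ_f = V` can be chosen with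
coefficients in `F_{q^d}` if and only if the `q^d`-power Frobenius `x ↦ x^{q^d}` maps `V`
bijectively onto itself.  Here `\bar{F}_q` is realized as an algebraic closure of `F_{q^d}`. -/
theorem separable_skew_poly_coeffs_in_Fqd_iff_frobenius_invariant
    (Fq Fqd : Type) [Field Fq] [Fintype Fq] [Field Fqd] [Fintype Fqd] [Algebra Fq Fqd]
    (q d : ℕ) (hq : q = Fintype.card Fq) (hqd : Fintype.card Fqd = q ^ d)
    (V : Submodule Fq (AlgebraicClosure Fqd)) [FiniteDimensional Fq V]
    (hker : ∃ (n : ℕ) (b : ℕ → AlgebraicClosure Fqd), b 0 ≠ 0 ∧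
      (V : Set (AlgebraicClosure Fqd)) =
        {x | ∑ i ∈ Finset.range (n + 1), b i * x ^ q ^ i = 0}) :
    (∃ (n : ℕ) (a : ℕ → Fqd), a 0 ≠ 0 ∧
        (V : Set (AlgebraicClosure Fqd)) =
          {x | ∑ i ∈ Finset.range (n + 1),
            algebraMap Fqd (AlgebraicClosure Fqd) (a i) * x ^ q ^ i = 0}) ↔
      Set.BijOn (fun x : AlgebraicClosure Fqd => x ^ q ^ d)
        (V : Set (AlgebraicClosure Fqd)) (V : Set (AlgebraicClosure Fqd)) :=
  separable_skew_poly_coeffs_in_Fqd_iff_frobenius_invariant_general Fq Fqd q d hq hqd V hker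
end

section
/- If f(τ), g(τ) ∈ \bar{F}_q{τ} are nonzero with ker φ_f = ker φ_g and f is not left-divisible by τ (i.e., f has nonzero constant coefficient) and both are monic, then there exists m ∈ ℕ with g(τ) = c τ^m f(τ) for some c ∈ \bar{F}_q^× (and g = τ^m f after normalizing leading coefficients). -/
/-! Let `m` be the least index with `b m ≠ 0`. Then `φ_g(x) = ψ(x^{q^m})` for
`ψ = Σ b_{m+i} X^{q^i}`, and since `x ↦ x^{q^m}` is an injective ring endomorphism of `\bar{F}_q`,
`φ_f(x)^{q^m} = φ_f'(x^{q^m})` for `φ_f' = Σ a_i^{q^m} X^{q^i}`. Every element is a `q^m`-th power,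
so `ψ` and `φ_f'` have the same roots. Their derivatives are the nonzero constants `b_m` and
`a_0^{q^m}`, so both are separable; being monic and split, they are equal, and comparing
coefficients gives `b_{m+i} = a_i^{q^m}`. -/

open Polynomial Finset

namespace Polynomial

section CommSemiring

variable {R : Type*} [CommSemiring R]

/-- `additivePoly q d n` is `φ_f` for `f = Σ_{i ≤ n} d i τ^i`. -/
noncomputable def additivePoly (q : ℕ) (d : ℕ → R) (n : ℕ) : R[X] :=
  ∑ i ∈ range (n + 1), C (d i) * X ^ q ^ i

theorem eval_additivePoly (q : ℕ) (d : ℕ → R) (n : ℕ) (x : R) :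
    (additivePoly q d n).eval x = ∑ i ∈ range (n + 1), d i * x ^ q ^ i := by
  simp [additivePoly, eval_finsetSum]

theorem coeff_additivePoly_pow {q : ℕ} (hq : 1 < q) (d : ℕ → R) (n j : ℕ) :
    (additivePoly q d n).coeff (q ^ j) = if j ≤ n then d j else 0 := by
  simp only [additivePoly, finsetSum_coeff, coeff_C_mul_X_pow,
    (Nat.pow_right_injective hq).eq_iff, sum_ite_eq, mem_range, Nat.lt_succ_iff]

theorem coeff_additivePoly_pow_of_support {q : ℕ} (hq : 1 < q) {d : ℕ → R} {n : ℕ}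
    (hd : ∀ i, n < i → d i = 0) (j : ℕ) : (additivePoly q d n).coeff (q ^ j) = d j := by
  rw [coeff_additivePoly_pow hq, ite_eq_left_iff, not_le]
  exact fun hj => (hd j hj).symm

theorem natDegree_additivePoly_le {q : ℕ} (hq : 0 < q) (d : ℕ → R) (n : ℕ) :
    (additivePoly q d n).natDegree ≤ q ^ n :=
  natDegree_sum_le_of_forall_le _ _ fun _ hi => (natDegree_C_mul_X_pow_le _ _).trans <|
    Nat.pow_le_pow_right hq (Nat.lt_succ_iff.mp (mem_range.mp hi))

theorem monic_additivePoly {q : ℕ} (hq : 1 < q) {d : ℕ → R} {n : ℕ} (hd : d n = 1) :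
    (additivePoly q d n).Monic :=
  monic_of_natDegree_le_of_coeff_eq_one _ (natDegree_additivePoly_le (by omega) d n) <| by
    rw [coeff_additivePoly_pow hq, if_pos le_rfl, hd]

theorem derivative_additivePoly {q : ℕ} (hq : (q : R) = 0) (d : ℕ → R) (n : ℕ) :
    derivative (additivePoly q d n) = C (d 0) := by
  simp [additivePoly, sum_range_succ', derivative_X_pow, hq]

theorem map_eval_additivePoly {S : Type*} [CommSemiring S] (σ : R →+* S) (q : ℕ) (d : ℕ → R)
    (n : ℕ) (x : R) :
    σ ((additivePoly q d n).eval x) = (additivePoly q (σ ∘ d) n).eval (σ x) := by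
  simp [eval_additivePoly, map_sum]

theorem eval_additivePoly_of_forall_lt_eq_zero (q : ℕ) {d : ℕ → R} {m n : ℕ} (hmn : m ≤ n)
    (hd : ∀ j < m, d j = 0) (x : R) :
    (additivePoly q d n).eval x =
      (additivePoly q (fun i => d (m + i)) (n - m)).eval (x ^ q ^ m) := by
  simp only [eval_additivePoly]
  rw [show n + 1 = m + (n - m + 1) by omega, sum_range_add,
    sum_eq_zero fun j hj => by rw [hd j (mem_range.mp hj), zero_mul], zero_add]
  refine sum_congr rfl fun i _ => ?_
  rw [← pow_mul, ← pow_add, add_comm]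

theorem eq_of_additivePoly_eq {q : ℕ} (hq : 1 < q) {d e : ℕ → R} {n n' : ℕ}
    (hd : ∀ i, n < i → d i = 0) (he : ∀ i, n' < i → e i = 0)
    (h : additivePoly q d n = additivePoly q e n') : d = e := by
  ext j
  rw [← coeff_additivePoly_pow_of_support hq hd, h, coeff_additivePoly_pow_of_support hq he]

end CommSemiring

theorem separable_additivePoly {R : Type*} [CommRing R] {q : ℕ} (hq : (q : R) = 0) {d : ℕ → R}
    (n : ℕ) (h0 : IsUnit (d 0)) : (additivePoly q d n).Separable := by
  rw [Separable, derivative_additivePoly hq]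
  exact ⟨0, C ↑h0.unit⁻¹, by simp [← C_mul]⟩

theorem eq_of_monic_of_separable_of_isRoot_iff {R : Type*} [CommRing R] [IsDomain R]
    {P Q : R[X]} (hP : P.Monic) (hQ : Q.Monic) (hPsp : P.Splits) (hQsp : Q.Splits)
    (hPs : P.Separable) (hQs : Q.Separable) (h : ∀ x, P.IsRoot x ↔ Q.IsRoot x) : P = Q := by
  have hroots : P.roots = Q.roots := by
    refine (Multiset.Nodup.ext (nodup_roots hPs) (nodup_roots hQs)).mpr fun x => ?_
    rw [mem_roots hP.ne_zero, mem_roots hQ.ne_zero, h]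
  rw [hPsp.eq_prod_roots_of_monic hP, hQsp.eq_prod_roots_of_monic hQ, hroots]

end Polynomial

namespace FiniteField

variable (Fq : Type*) [Field Fq] [Fintype Fq]

theorem frobeniusAlgHom_pow_apply {R : Type*} [CommRing R] [Algebra Fq R] (m : ℕ) (x : R) :
    (frobeniusAlgHom Fq R ^ m) x = x ^ Fintype.card Fq ^ m := by
  rw [AlgHom.coe_pow, coe_frobeniusAlgHom, pow_iterate]

variable {K : Type*} [Field K] [Algebra Fq K] [IsAlgClosed K]

theorem additivePoly_pow_card_eq_of_isRoot_iff {a b : ℕ → K} {nf ng m : ℕ}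
    (ha : a nf = 1) (ha0 : a 0 ≠ 0) (hb : b ng = 1) (hmng : m ≤ ng) (hbm : b m ≠ 0)
    (hb_lt : ∀ j < m, b j = 0)
    (hroots : ∀ x, (additivePoly (Fintype.card Fq) a nf).IsRoot x ↔
      (additivePoly (Fintype.card Fq) b ng).IsRoot x) :
    additivePoly (Fintype.card Fq) (fun i => a i ^ Fintype.card Fq ^ m) nf =
      additivePoly (Fintype.card Fq) (fun i => b (m + i)) (ng - m) := by
  set q := Fintype.card Fq
  have hq1 : 1 < q := Fintype.one_lt_card
  have hq0 : (q : K) = 0 := by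
    rw [← map_natCast (algebraMap Fq K), cast_card_eq_zero, map_zero]
  set σ := (frobeniusAlgHom Fq K ^ m).toRingHom
  have hσ (x : K) : σ x = x ^ q ^ m := frobeniusAlgHom_pow_apply Fq m x
  refine eq_of_monic_of_separable_of_isRoot_iff (monic_additivePoly hq1 (by simp [ha]))
    (monic_additivePoly hq1 (by rw [Nat.add_sub_cancel' hmng, hb]))
    (IsAlgClosed.splits _) (IsAlgClosed.splits _)
    (separable_additivePoly hq0 nf (pow_ne_zero _ ha0).isUnit)
    (separable_additivePoly hq0 (ng - m) hbm.isUnit) fun y => ?_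
  obtain ⟨x, rfl⟩ := IsAlgClosed.exists_pow_nat_eq y (pow_pos (by omega : 0 < q) m)
  have hσa : (fun i => a i ^ q ^ m) = σ ∘ a := funext fun i => (hσ (a i)).symm
  rw [IsRoot.def, IsRoot.def, hσa, ← hσ, ← map_eval_additivePoly, map_eq_zero_iff _ σ.injective,
    hσ, ← eval_additivePoly_of_forall_lt_eq_zero _ hmng hb_lt]
  exact hroots x

end FiniteField

/-- If `f, g` are nonzero monic skew polynomials over `\bar{F}_q` with
`ker φ_f = ker φ_g` and `f` not left-divisible by `τ` (nonzero constant coefficient), then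
`g = τ^m f` for some `m ∈ ℕ`; on coefficients (with `τ^m Σ a_i τ^i = Σ a_i^{q^m} τ^{i+m}`) this
says `g` has coefficients `b_{m+i} = a_i^{q^m}` and `b_j = 0` for `j < m`. -/
theorem same_kernel_implies_tau_power_multiple
    (Fq : Type) [Field Fq] [Fintype Fq] (q : ℕ) (hq : q = Fintype.card Fq)
    (nf ng : ℕ) (a b : ℕ → AlgebraicClosure Fq)
    (ha_supp : ∀ i, nf < i → a i = 0) (hb_supp : ∀ i, ng < i → b i = 0)
    (ha_monic : a nf = 1) (hb_monic : b ng = 1)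
    (ha0 : a 0 ≠ 0)
    (hker : {x : AlgebraicClosure Fq | ∑ i ∈ Finset.range (nf + 1), a i * x ^ q ^ i = 0} =
            {x : AlgebraicClosure Fq | ∑ i ∈ Finset.range (ng + 1), b i * x ^ q ^ i = 0}) :
    ∃ m : ℕ, (∀ j, j < m → b j = 0) ∧ ∀ i, b (m + i) = a i ^ q ^ m := by
  classical
  subst hq
  have hb : ∃ j, b j ≠ 0 := ⟨ng, by simp [hb_monic]⟩
  set m := Nat.find hb
  have hb_lt : ∀ j < m, b j = 0 := fun j hj => not_not.mp (Nat.find_min hb hj)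
  have hroots : ∀ x, (additivePoly (Fintype.card Fq) a nf).IsRoot x ↔
      (additivePoly (Fintype.card Fq) b ng).IsRoot x := fun x => by
    simpa only [IsRoot.def, eval_additivePoly, Set.mem_ofPred_eq] using Set.ext_iff.mp hker x
  have hmng : m ≤ ng := Nat.find_min' hb (by simp [hb_monic])
  have hcoeff := eq_of_additivePoly_eq Fintype.one_lt_card
    (fun i hi => by simp [ha_supp i hi]) (fun i hi => hb_supp _ (by omega))
    (FiniteField.additivePoly_pow_card_eq_of_isRoot_iff Fq ha_monic ha0 hb_monic hmng
      (Nat.find_spec hb) hb_lt hroots)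
  exact ⟨m, hb_lt, fun i => (congrFun hcoeff i).symm⟩
end

section
/- The F_q(t)-algebra F_{q^d}(τ) := F_{q^d}{τ} ⊗_{F_q[t]} F_q(t), where t = τ^d is central, is a central division algebra of dimension d² over F_q(t). -/
open scoped TensorProduct

/-!
The skew polynomial ring `R = F_{q^d}{τ}` has no zero divisors (leading coefficients multiply,
since `τ^a λ = λ^{q^a} τ^a`), and it is a free `F_q[t]`-module on the `d²` elements `λ_i τ^j`,
where `λ_i` runs over an `F_q`-basis of `F_{q^d}` and `0 ≤ j < d`. Its centre is `F_q[t]`: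
commuting with `τ` forces every coefficient to satisfy `a^q = a`, hence to lie in `F_q`, and
commuting with all of `F_{q^d}` kills the coefficient of `τ^n` unless `d ∣ n`, because the
Frobenius of `F_{q^d}/F_q` has order exactly `d`.

Every element of `F_q(t) ⊗ R` has the form `s⁻¹ ⊗ r` with `0 ≠ s ∈ F_q[t]`, and `R` embeds in
it, so the localization is again a domain with centre `F_q(t)`. Being finite-dimensional over
`F_q(t)`, it is Artinian, so its nonzero elements are units.
-/

/-- A characterization of the skew polynomial ring `K{τ}` (for `K = F_{q^d}`) with commutation
rule `τ·λ = λ^q·τ`: a ring `R` together with coefficient maps `c n : R →+ K` such that elements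
are uniquely determined by their (finitely supported) coefficients, every finitely supported
family of coefficients occurs, `1` and `τ` have the expected coefficients, and multiplication
is the twisted convolution `c_n(x·y) = Σ_{i=0}^n c_i(x)·c_{n-i}(y)^{q^i}` (which encodes
`τλ = λ^q τ`). -/
structure IsSkewPolyRing (q : ℕ) (K : Type) [Field K] (R : Type) [Ring R]
    (c : ℕ → R →+ K) (τ : R) : Prop where
  inj : Function.Injective fun (x : R) (n : ℕ) => c n x
  support_finite : ∀ x : R, (Function.support fun n => c n x).Finite
  surj : ∀ f : ℕ →₀ K, ∃ x : R, ∀ n, c n x = f n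
  coeff_one : ∀ n, c n (1 : R) = if n = 0 then 1 else 0
  coeff_tau : ∀ n, c n τ = if n = 1 then 1 else 0
  coeff_mul : ∀ x y : R, ∀ n,
    c n (x * y) = ∑ i ∈ Finset.range (n + 1), c i x * c (n - i) y ^ q ^ i

theorem Nat.mul_add_eq_mul_add_iff {d m k i j : ℕ} (hi : i < d) (hj : j < d) :
    d * m + i = d * k + j ↔ m = k ∧ i = j := by
  refine ⟨fun h => ⟨?_, ?_⟩, fun ⟨hmk, hij⟩ => hmk ▸ hij ▸ rfl⟩
  · simpa [Nat.mul_add_div (by omega : 0 < d), Nat.div_eq_of_lt, hi, hj] using congrArg (· / d) h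
  · simpa [Nat.mod_eq_of_lt, hi, hj] using congrArg (· % d) h

namespace FiniteField

theorem pow_card_pow_finrank_mul {Fq K : Type*} [Field Fq] [Fintype Fq] [Field K]
    [Fintype K] [Algebra Fq K] (a : K) (m : ℕ) :
    a ^ Fintype.card Fq ^ (Module.finrank Fq K * m) = a := by
  rw [pow_mul, ← Module.card_eq_pow_finrank, FiniteField.pow_card_pow]

variable {Fq K : Type*} [Field Fq] [Fintype Fq] [Field K] [Finite K] [Algebra Fq K]

theorem exists_pow_card_pow_ne_self {r : ℕ} (hr0 : r ≠ 0) (hr : r < Module.finrank Fq K) :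
    ∃ a : K, a ^ Fintype.card Fq ^ r ≠ a := by
  have hne := pow_ne_one_of_lt_orderOf hr0 (hr.trans_eq (orderOf_frobeniusAlgHom Fq K).symm)
  obtain ⟨a, ha⟩ := DFunLike.ne_iff.mp hne
  exact ⟨a, by simpa [coe_frobeniusAlgHom, pow_iterate] using ha⟩

theorem mem_range_algebraMap_of_pow_card_eq_self {x : K} (hx : x ^ Fintype.card Fq = x) :
    x ∈ Set.range (algebraMap Fq K) := by
  rw [IsGalois.mem_range_algebraMap_iff_fixed]
  intro f
  obtain ⟨n, rfl⟩ := (bijective_frobeniusAlgEquivOfAlgebraic_pow Fq K).2 f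
  simp only [AlgEquiv.coe_pow, coe_frobeniusAlgEquivOfAlgebraic]
  exact Function.iterate_fixed hx n

end FiniteField

namespace Algebra.TensorProduct

variable {S F R : Type*} [CommRing S] [CommRing F] [Algebra S F] [Ring R] [Algebra S R]

theorem exists_smul_eq_includeRight (M : Submonoid S) [IsLocalization M F] (z : F ⊗[S] R) :
    ∃ m ∈ M, ∃ r : R, m • z = includeRight r := by
  have := (isLocalizedModule_iff_isBaseChange M F _).mpr (TensorProduct.isBaseChange S R F)
  obtain ⟨⟨r, m⟩, hm⟩ := IsLocalizedModule.surj M (TensorProduct.mk S F R 1) z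
  exact ⟨m, m.2, r, hm⟩

theorem smul_injective_of_mem {M : Submonoid S} [IsLocalization M F] {m : S} (hm : m ∈ M) :
    Function.Injective fun z : F ⊗[S] R => m • z := fun z w hzw => by
  simp only [← algebraMap_smul F m] at hzw
  exact (IsLocalization.map_units F ⟨m, hm⟩).smul_left_cancel.mp hzw

theorem noZeroDivisors_of_injective_includeRight (M : Submonoid S) [IsLocalization M F]
    [NoZeroDivisors R] (hinj : Function.Injective (includeRight : R →ₐ[S] F ⊗[S] R)) :
    NoZeroDivisors (F ⊗[S] R) where
  eq_zero_or_eq_zero_of_mul_eq_zero {z w} hzw := by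
    obtain ⟨m, hm, r, hr⟩ := exists_smul_eq_includeRight M z
    obtain ⟨n, hn, s, hs⟩ := exists_smul_eq_includeRight M w
    have hrs : includeRight (r * s) = (m * n) • (z * w) := by
      rw [map_mul, ← hr, ← hs, smul_mul_smul_comm]
    rw [hzw, smul_zero, ← map_zero includeRight] at hrs
    rcases mul_eq_zero.mp (hinj hrs) with rfl | rfl
    · exact .inl <| smul_injective_of_mem hm
        (show m • z = m • 0 by rw [hr, map_zero, smul_zero])
    · exact .inr <| smul_injective_of_mem hn
        (show n • w = n • 0 by rw [hs, map_zero, smul_zero])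

theorem center_eq_range_algebraMap (M : Submonoid S) [IsLocalization M F]
    (hinj : Function.Injective (includeRight : R →ₐ[S] F ⊗[S] R))
    (hR : Subring.center R = (algebraMap S R).range) :
    Subring.center (F ⊗[S] R) = (algebraMap F (F ⊗[S] R)).range := by
  refine le_antisymm (fun z hz => ?_) ?_
  · obtain ⟨m, hm, r, hr⟩ := exists_smul_eq_includeRight M z
    have hrc : r ∈ Subring.center R := Subring.mem_center_iff.mpr fun y => hinj <| by
      rw [map_mul, map_mul, ← hr, mul_smul_comm, smul_mul_assoc,
        Subring.mem_center_iff.mp hz]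
    obtain ⟨s, rfl⟩ := hR ▸ hrc
    refine ⟨IsLocalization.mk' F s ⟨m, hm⟩, smul_injective_of_mem hm ?_⟩
    dsimp only
    rw [hr, AlgHom.commutes, ← algebraMap_smul F m, Algebra.smul_def, ← map_mul,
      IsLocalization.mk'_spec' F s ⟨m, hm⟩, ← IsScalarTower.algebraMap_apply]
  · rintro _ ⟨f, rfl⟩
    exact Subring.mem_center_iff.mpr fun y => (Algebra.commutes f y).symm

end Algebra.TensorProduct

namespace IsSkewPolyRing

section

variable {q : ℕ} {K : Type} [Field K] {R : Type} [Ring R] {c : ℕ → R →+ K} {τ : R}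
  (h : IsSkewPolyRing q K R c τ)
include h

theorem ext {x y : R} (hxy : ∀ n, c n x = c n y) : x = y :=
  h.inj (funext hxy)

theorem coeff_mul_of_coeff_eq_zero_left {x : R} {k : ℕ} (hx : ∀ m ≠ k, c m x = 0) (y : R)
    (n : ℕ) : c n (x * y) = if k ≤ n then c k x * c (n - k) y ^ q ^ k else 0 := by
  rw [h.coeff_mul]
  split_ifs with hkn
  · exact Finset.sum_eq_single k (fun i _ hik => by rw [hx i hik, zero_mul])
      (fun hk => absurd (Finset.mem_range.2 (by omega)) hk)
  · exact Finset.sum_eq_zero fun i hi => by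
      rw [hx i (by simp at hi; omega), zero_mul]

theorem coeff_mul_of_coeff_eq_zero_right (hq : q ≠ 0) {y : R} {k : ℕ}
    (hy : ∀ m ≠ k, c m y = 0) (x : R) (n : ℕ) :
    c n (x * y) = if k ≤ n then c (n - k) x * c k y ^ q ^ (n - k) else 0 := by
  rw [h.coeff_mul]
  split_ifs with hkn
  · rw [Finset.sum_eq_single (n - k), Nat.sub_sub_self hkn]
    · intro i hi hik
      rw [hy (n - i) (by simp at hi; omega), zero_pow (pow_ne_zero _ hq), mul_zero]
    · exact fun hk => absurd (Finset.mem_range.2 (by omega)) hk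
  · exact Finset.sum_eq_zero fun i hi => by
      rw [hy (n - i) (by omega), zero_pow (pow_ne_zero _ hq), mul_zero]

theorem coeff_tau_pow (hq : q ≠ 0) (k n : ℕ) : c n (τ ^ k) = if n = k then 1 else 0 := by
  induction k generalizing n with
  | zero => simpa using h.coeff_one n
  | succ k ih =>
    rw [pow_succ, h.coeff_mul_of_coeff_eq_zero_right hq (k := 1) (fun m hm => by
      simp [h.coeff_tau, hm]), ih, h.coeff_tau]
    split_ifs <;> first | omega | simp

theorem exists_coeff_ne_zero_forall_gt_eq_zero {x : R} (hx : x ≠ 0) :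
    ∃ a, c a x ≠ 0 ∧ ∀ m, a < m → c m x = 0 := by
  have hne : (h.support_finite x).toFinset.Nonempty := by
    by_contra hempty
    refine hx (h.ext fun n => ?_)
    by_contra hn
    exact hempty ⟨n, by simpa using hn⟩
  obtain ⟨a, ha, hmax⟩ := (h.support_finite x).toFinset.exists_max_image id hne
  refine ⟨a, by simpa using ha, fun m ham => ?_⟩
  by_contra hm
  exact absurd (hmax m (by simpa using hm)) (by simpa using ham)

theorem coeff_add_mul_of_forall_gt_eq_zero (hq : q ≠ 0) {x y : R} {a b : ℕ}
    (hx : ∀ m, a < m → c m x = 0) (hy : ∀ m, b < m → c m y = 0) :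
    c (a + b) (x * y) = c a x * c b y ^ q ^ a := by
  rw [h.coeff_mul, Finset.sum_eq_single a, Nat.add_sub_cancel_left]
  · intro i hi hia
    rcases lt_or_gt_of_ne hia with hlt | hgt
    · rw [hy _ (by simp at hi; omega), zero_pow (pow_ne_zero _ hq), mul_zero]
    · rw [hx _ hgt, zero_mul]
  · exact fun ha => absurd (Finset.mem_range.2 (by omega)) ha

theorem noZeroDivisors (hq : q ≠ 0) : NoZeroDivisors R where
  eq_zero_or_eq_zero_of_mul_eq_zero {x y} hxy := by
    by_contra! hne
    obtain ⟨a, hxa, hx⟩ := h.exists_coeff_ne_zero_forall_gt_eq_zero hne.1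
    obtain ⟨b, hyb, hy⟩ := h.exists_coeff_ne_zero_forall_gt_eq_zero hne.2
    have hlead := h.coeff_add_mul_of_forall_gt_eq_zero hq hx hy
    rw [hxy, map_zero] at hlead
    exact mul_ne_zero hxa (pow_ne_zero _ hyb) hlead.symm

theorem coeff_pow_eq_self_of_commute_tau (hq : q ≠ 0) {x : R} (hx : x * τ = τ * x) (n : ℕ) :
    c n x ^ q = c n x := by
  have hτ : ∀ m ≠ 1, c m τ = 0 := fun m hm => by rw [h.coeff_tau, if_neg hm]
  have hright := h.coeff_mul_of_coeff_eq_zero_right hq hτ x (n + 1)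
  have hleft := h.coeff_mul_of_coeff_eq_zero_left hτ x (n + 1)
  simp only [h.coeff_tau, hx, le_add_iff_nonneg_left, zero_le, if_true, one_pow, mul_one,
    one_mul, pow_one, Nat.add_sub_cancel] at hright hleft
  rw [← hleft, hright]

variable {ι : K →+* R} (hι : ∀ (a : K) (n : ℕ), c n (ι a) = if n = 0 then a else 0)
include hι

theorem coeff_iota_mul (a : K) (x : R) (n : ℕ) : c n (ι a * x) = a * c n x := by
  rw [h.coeff_mul_of_coeff_eq_zero_left (k := 0) (fun m hm => by simp [hι, hm])]
  simp [hι]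

theorem coeff_mul_iota (hq : q ≠ 0) (x : R) (a : K) (n : ℕ) :
    c n (x * ι a) = c n x * a ^ q ^ n := by
  rw [h.coeff_mul_of_coeff_eq_zero_right hq (k := 0) (fun m hm => by simp [hι, hm])]
  simp [hι]

theorem coeff_iota_mul_tau_pow (hq : q ≠ 0) (a : K) (k n : ℕ) :
    c n (ι a * τ ^ k) = if n = k then a else 0 := by
  simp [h.coeff_iota_mul hι, h.coeff_tau_pow hq]

theorem tau_pow_mul_iota (hq : q ≠ 0) (a : K) (k : ℕ) :
    τ ^ k * ι a = ι (a ^ q ^ k) * τ ^ k := by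
  refine h.ext fun n => ?_
  rw [h.coeff_iota_mul_tau_pow hι hq, h.coeff_mul_of_coeff_eq_zero_left
    (fun m hm => by rw [h.coeff_tau_pow hq, if_neg hm]), h.coeff_tau_pow hq, hι]
  split_ifs <;> first | omega | simp [zero_pow (pow_ne_zero _ hq)]

theorem eq_sum_iota_mul_tau_pow (hq : q ≠ 0) (x : R) :
    x = ∑ n ∈ (h.support_finite x).toFinset, ι (c n x) * τ ^ n := by
  refine h.ext fun m => ?_
  simp only [map_sum, h.coeff_iota_mul_tau_pow hι hq, Finset.sum_ite_eq,
    Set.Finite.mem_toFinset, Function.mem_support]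
  split_ifs with hm
  · rfl
  · simpa using hm

theorem coeff_mul_pow_eq_of_commute_iota (hq : q ≠ 0) {x : R} {a : K} (hx : x * ι a = ι a * x)
    (n : ℕ) : c n x * a ^ q ^ n = a * c n x := by
  rw [← h.coeff_mul_iota hι hq, hx, h.coeff_iota_mul hι]

end

section

open Polynomial

theorem algebraMap_monomial {Fq : Type*} {K R : Type} [Field Fq] [Field K] [Algebra Fq K]
    [Ring R] {τ : R} {ι : K →+* R} [Algebra Fq[X] R] {d : ℕ}
    (halg : ∀ p : Fq[X],
      algebraMap Fq[X] R p = p.sum fun n a => ι (algebraMap Fq K a) * τ ^ (d * n))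
    (m : ℕ) (b : Fq) :
    algebraMap Fq[X] R (monomial m b) = ι (algebraMap Fq K b) * τ ^ (d * m) := by
  rw [halg, sum_monomial_index _ _ (by simp)]

variable {Fq : Type*} {K R : Type} [Field Fq] [Fintype Fq] [Field K] [Fintype K] [Algebra Fq K]
  [Ring R] {c : ℕ → R →+ K} {τ : R} {ι : K →+* R} {d : ℕ}
  (h : IsSkewPolyRing (Fintype.card Fq) K R c τ)
  (hι : ∀ (a : K) (n : ℕ), c n (ι a) = if n = 0 then a else 0)
  (hd : Module.finrank Fq K = d)
include h hι hd

theorem dvd_of_coeff_ne_zero_of_commute_iota {x : R} (hx : ∀ a, x * ι a = ι a * x) {n : ℕ}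
    (hn : c n x ≠ 0) : d ∣ n := by
  have hd0 : 0 < d := hd ▸ Module.finrank_pos
  by_contra hnd
  obtain ⟨a, ha⟩ := FiniteField.exists_pow_card_pow_ne_self (Fq := Fq) (K := K)
    (fun h0 => hnd (Nat.dvd_of_mod_eq_zero h0)) (hd.symm ▸ Nat.mod_lt n hd0)
  have hcomm := h.coeff_mul_pow_eq_of_commute_iota hι Fintype.card_ne_zero (hx a) n
  rw [← Nat.div_add_mod n d, pow_add, pow_mul, ← hd, FiniteField.pow_card_pow_finrank_mul,
    hd, Nat.div_add_mod] at hcomm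
  exact ha (mul_left_cancel₀ hn (hcomm.trans (mul_comm _ _)))

variable [Algebra Fq[X] R]
  (halg : ∀ p : Fq[X],
    algebraMap Fq[X] R p = p.sum fun n a => ι (algebraMap Fq K a) * τ ^ (d * n))
include halg

theorem algebraMap_monomial_mul (m : ℕ) (b : Fq) (a : K) (j : ℕ) :
    algebraMap Fq[X] R (monomial m b) * (ι a * τ ^ j) =
      ι (algebraMap Fq K b * a) * τ ^ (d * m + j) := by
  have hcomm : τ ^ (d * m) * ι a = ι a * τ ^ (d * m) := by
    rw [h.tau_pow_mul_iota hι Fintype.card_ne_zero, ← hd,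
      FiniteField.pow_card_pow_finrank_mul]
  rw [algebraMap_monomial halg, map_mul, pow_add, mul_assoc, ← mul_assoc (τ ^ _), hcomm,
    mul_assoc, mul_assoc]

theorem coeff_smul_iota_mul_tau_pow (p : Fq[X]) (a : K) {i j : ℕ} (hi : i < d) (hj : j < d)
    (m : ℕ) : c (d * m + i) (p • (ι a * τ ^ j)) =
      if i = j then algebraMap Fq K (p.coeff m) * a else 0 := by
  induction p using Polynomial.induction_on' with
  | add p p' hp hp' =>
    rw [add_smul, map_add, hp, hp', coeff_add, map_add, add_mul]
    split_ifs <;> simp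
  | monomial k b =>
    rw [Algebra.smul_def, h.algebraMap_monomial_mul hι hd halg,
      h.coeff_iota_mul_tau_pow hι Fintype.card_ne_zero, coeff_monomial]
    simp only [Nat.mul_add_eq_mul_add_iff hi hj]
    rcases eq_or_ne k m with rfl | hkm
    · simp
    · simp [hkm, hkm.symm]

theorem linearIndependent_iota_mul_tau_pow {β : Type*} [Fintype β] (B : Module.Basis β Fq K) :
    LinearIndependent Fq[X] fun ij : β × Fin d => ι (B ij.1) * τ ^ (ij.2 : ℕ) := by
  rw [Fintype.linearIndependent_iff]
  rintro g hg ⟨i₀, j₀⟩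
  ext m
  have hcoeff := congrArg (c (d * m + j₀)) hg
  simp only [map_sum, map_zero, h.coeff_smul_iota_mul_tau_pow hι hd halg _ _ j₀.2 (Fin.isLt _),
    Fintype.sum_prod_type, Fin.val_inj, Finset.sum_ite_eq, Finset.mem_univ, if_true,
    ← Algebra.smul_def] at hcoeff
  simpa using Fintype.linearIndependent_iff.mp B.linearIndependent _ hcoeff i₀

theorem iota_mul_tau_pow_mem_span {β : Type*} [Fintype β] (B : Module.Basis β Fq K) (a : K)
    (n : ℕ) : ι a * τ ^ n ∈ Submodule.span Fq[X]
      (Set.range fun ij : β × Fin d => ι (B ij.1) * τ ^ (ij.2 : ℕ)) := by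
  have hd0 : 0 < d := hd ▸ Module.finrank_pos
  have hsum : ι a * τ ^ n =
      ∑ i, monomial (n / d) (B.repr a i) • (ι (B i) * τ ^ (n % d)) := by
    conv_lhs => rw [← B.sum_repr a]
    simp only [Algebra.smul_def, h.algebraMap_monomial_mul hι hd halg, Nat.div_add_mod,
      map_sum, Finset.sum_mul]
  rw [hsum]
  exact Submodule.sum_mem _ fun i _ =>
    Submodule.smul_mem _ _ (Submodule.subset_span ⟨(i, ⟨n % d, Nat.mod_lt n hd0⟩), rfl⟩)

theorem span_iota_mul_tau_pow {β : Type*} [Fintype β] (B : Module.Basis β Fq K) :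
    ⊤ ≤ Submodule.span Fq[X]
      (Set.range fun ij : β × Fin d => ι (B ij.1) * τ ^ (ij.2 : ℕ)) := by
  intro x _
  rw [h.eq_sum_iota_mul_tau_pow hι Fintype.card_ne_zero x]
  exact Submodule.sum_mem _ fun n _ => h.iota_mul_tau_pow_mem_span hι hd halg B _ n

theorem mem_range_algebraMap_of_commute {x : R} (hτ : x * τ = τ * x)
    (hx : ∀ a, x * ι a = ι a * x) : x ∈ (algebraMap Fq[X] R).range := by
  have hcoeff (n : ℕ) : c n x ∈ Set.range (algebraMap Fq K) :=
    FiniteField.mem_range_algebraMap_of_pow_card_eq_self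
      (h.coeff_pow_eq_self_of_commute_tau Fintype.card_ne_zero hτ n)
  choose b hb using hcoeff
  refine ⟨∑ n ∈ (h.support_finite x).toFinset, monomial (n / d) (b n), ?_⟩
  conv_rhs => rw [h.eq_sum_iota_mul_tau_pow hι Fintype.card_ne_zero x]
  refine (map_sum _ _ _).trans (Finset.sum_congr rfl fun n hn => ?_)
  rw [algebraMap_monomial halg, hb, Nat.mul_div_cancel'
    (h.dvd_of_coeff_ne_zero_of_commute_iota hι hd hx (by simpa using hn))]

theorem center_eq_range_algebraMap : Subring.center R = (algebraMap Fq[X] R).range := by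
  refine le_antisymm (fun x hx => ?_) ?_
  · rw [Subring.mem_center_iff] at hx
    exact h.mem_range_algebraMap_of_commute hι hd halg (hx τ).symm fun a => (hx (ι a)).symm
  · rintro _ ⟨p, rfl⟩
    exact Subring.mem_center_iff.mpr fun y => (Algebra.commutes p y).symm

end

end IsSkewPolyRing

theorem skew_quotient_algebra_is_central_division_algebra_general
    (Fq K R : Type) [Field Fq] [Fintype Fq] [Field K] [Fintype K] [Algebra Fq K] [Ring R]
    (q d : ℕ) (hq : q = Fintype.card Fq) (hK : Fintype.card K = q ^ d)
    (c : ℕ → R →+ K) (τ : R) (h : IsSkewPolyRing q K R c τ)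
    (ι : K →+* R) (hι : ∀ (a : K) (n : ℕ), c n (ι a) = if n = 0 then a else 0)
    [Algebra (Polynomial Fq) R]
    (halg : ∀ p : Polynomial Fq,
      algebraMap (Polynomial Fq) R p =
        p.sum fun n a => ι (algebraMap Fq K a) * τ ^ (d * n)) :
    (∀ z : RatFunc Fq ⊗[Polynomial Fq] R, z ≠ 0 → IsUnit z) ∧
    Subring.center (RatFunc Fq ⊗[Polynomial Fq] R) =
      (algebraMap (RatFunc Fq) (RatFunc Fq ⊗[Polynomial Fq] R)).range ∧
    Module.finrank (RatFunc Fq) (RatFunc Fq ⊗[Polynomial Fq] R) = d ^ 2 := by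
  subst hq
  have hd : Module.finrank Fq K = d :=
    Nat.pow_right_injective Fintype.one_lt_card (Module.card_eq_pow_finrank.symm.trans hK)
  let B := Module.finBasisOfFinrankEq Fq K hd
  let b := Module.Basis.mk (h.linearIndependent_iota_mul_tau_pow hι hd halg B)
    (h.span_iota_mul_tau_pow hι hd halg B)
  have := Module.Free.of_basis b
  have := Module.Finite.of_basis b
  have := h.noZeroDivisors Fintype.card_ne_zero
  have hinj := Algebra.TensorProduct.includeRight_injective (A := RatFunc Fq) (B := R)
    (IsFractionRing.injective (Polynomial Fq) (RatFunc Fq))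
  have := Algebra.TensorProduct.noZeroDivisors_of_injective_includeRight (nonZeroDivisors _) hinj
  have := IsArtinianRing.of_finite (RatFunc Fq) (RatFunc Fq ⊗[Polynomial Fq] R)
  refine ⟨fun z hz => IsArtinianRing.isUnit_of_mem_nonZeroDivisors
      (mem_nonZeroDivisors_of_ne_zero hz),
    Algebra.TensorProduct.center_eq_range_algebraMap (nonZeroDivisors _) hinj
      (h.center_eq_range_algebraMap hι hd halg), ?_⟩
  rw [Module.finrank_baseChange, Module.finrank_eq_card_basis b]
  simp [sq]

/-- The `F_q(t)`-algebra `F_{q^d}(τ) := F_{q^d}{τ} ⊗_{F_q[t]} F_q(t)`, where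
`t = τ^d` is central, is a central division algebra of dimension `d²` over `F_q(t)`.
The `F_q[t]`-algebra structure on the skew polynomial ring `R` is required to send a
polynomial `p` to `p(τ^d)` (with `F_q`-coefficients embedded as constants `ι`). -/
theorem skew_quotient_algebra_is_central_division_algebra
    (Fq K R : Type) [Field Fq] [Fintype Fq] [Field K] [Fintype K] [Algebra Fq K] [Ring R]
    (q d : ℕ) (hq : q = Fintype.card Fq) (hd : 0 < d) (hK : Fintype.card K = q ^ d)
    (c : ℕ → R →+ K) (τ : R) (h : IsSkewPolyRing q K R c τ)
    (ι : K →+* R) (hι : ∀ (a : K) (n : ℕ), c n (ι a) = if n = 0 then a else 0)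
    [Algebra (Polynomial Fq) R]
    (halg : ∀ p : Polynomial Fq,
      algebraMap (Polynomial Fq) R p =
        p.sum fun n a => ι (algebraMap Fq K a) * τ ^ (d * n)) :
    (∀ z : RatFunc Fq ⊗[Polynomial Fq] R, z ≠ 0 → IsUnit z) ∧
    Subring.center (RatFunc Fq ⊗[Polynomial Fq] R) =
      (algebraMap (RatFunc Fq) (RatFunc Fq ⊗[Polynomial Fq] R)).range ∧
    Module.finrank (RatFunc Fq) (RatFunc Fq ⊗[Polynomial Fq] R) = d ^ 2 :=
  skew_quotient_algebra_is_central_division_algebra_general Fq K R q d hq hK c τ h ι hι halg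
end

section
/- F_{q^d}{τ} is a maximal F_q[t]-order in the division algebra F_{q^d}(τ), where t = τ^d. -/
open scoped TensorProduct


namespace SkewAux

variable {q : ℕ} {K R : Type} [Field K] [Ring R] {c : ℕ → R →+ K} {τ : R}

theorem ext (h : IsSkewPolyRing q K R c τ) {x y : R} (H : ∀ n, c n x = c n y) : x = y :=
  h.inj (funext H)

theorem eq_zero (h : IsSkewPolyRing q K R c τ) {x : R} (H : ∀ n, c n x = 0) : x = 0 :=
  ext h fun n => by rw [H n, map_zero]

theorem coeff_iota_mul (h : IsSkewPolyRing q K R c τ) {ι : K →+* R}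
    (hι : ∀ (a : K) (n : ℕ), c n (ι a) = if n = 0 then a else 0)
    (a : K) (x : R) (m : ℕ) : c m (ι a * x) = a * c m x := by
  rw [h.coeff_mul]
  rw [Finset.sum_eq_single 0]
  · simp [hι]
  · intro i hi hne; simp [hι, hne]
  · simp

theorem coeff_tau_mul (h : IsSkewPolyRing q K R c τ) (x : R) (m : ℕ) :
    c m (τ * x) = if 1 ≤ m then c (m-1) x ^ q else 0 := by
  rw [h.coeff_mul]
  simp only [h.coeff_tau, ite_mul, one_mul, zero_mul]
  rw [Finset.sum_ite_eq' (Finset.range (m+1)) 1 (fun i => c (m - i) x ^ q ^ i)]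
  by_cases hm : 1 ≤ m
  · rw [if_pos (Finset.mem_range.mpr (by omega)), if_pos hm, pow_one]
  · rw [if_neg (by simp [Finset.mem_range]; omega), if_neg hm]

theorem coeff_tau_pow_mul (h : IsSkewPolyRing q K R c τ) (hq : q ≠ 0) (x : R) (k m : ℕ) :
    c m (τ ^ k * x) = if k ≤ m then c (m-k) x ^ q ^ k else 0 := by
  induction k generalizing m with
  | zero => simp
  | succ k ih =>
    rw [pow_succ', mul_assoc, coeff_tau_mul h]
    by_cases hm : 1 ≤ m
    · rw [if_pos hm, ih]
      by_cases hk : k + 1 ≤ m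
      · rw [if_pos (by omega), if_pos hk, show m - 1 - k = m - (k+1) by omega,
          ← pow_mul, ← pow_succ]
      · rw [if_neg (by omega), if_neg hk, zero_pow hq]
    · rw [if_neg hm, if_neg (by omega)]

theorem coeff_mul_tau (h : IsSkewPolyRing q K R c τ) (hq : q ≠ 0) (x : R) (m : ℕ) :
    c m (x * τ) = if 1 ≤ m then c (m-1) x else 0 := by
  rw [h.coeff_mul]
  simp only [h.coeff_tau]
  cases m with
  | zero => simp
  | succ m' =>
    rw [Finset.sum_congr rfl (fun i hi => ?_),
      Finset.sum_ite_eq' (Finset.range (m'+2)) m' (fun i => c i x)]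
    · rw [if_pos (Finset.mem_range.mpr (by omega)), if_pos (by omega)]
      simp
    · have hi' : i ≤ m' + 1 := by simpa [Nat.lt_succ_iff] using Finset.mem_range.mp hi
      by_cases he : i = m'
      · rw [if_pos he, if_pos (by omega), one_pow, mul_one, he]
      · rw [if_neg he, if_neg (by omega), zero_pow (pow_ne_zero _ hq), mul_zero]

theorem coeff_mul_tau_pow (h : IsSkewPolyRing q K R c τ) (hq : q ≠ 0) (x : R) (k m : ℕ) :
    c m (x * τ ^ k) = if k ≤ m then c (m-k) x else 0 := by
  induction k generalizing m with
  | zero => simp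
  | succ k ih =>
    rw [pow_succ, ← mul_assoc, coeff_mul_tau h hq, ]
    by_cases hm : 1 ≤ m
    · rw [if_pos hm, ih]
      by_cases hk : k + 1 ≤ m
      · rw [if_pos (by omega), if_pos hk, show m - 1 - k = m - (k+1) by omega]
      · rw [if_neg (by omega), if_neg hk]
    · rw [if_neg hm, if_neg (by omega)]

theorem coeff_tau_pow (h : IsSkewPolyRing q K R c τ) (hq : q ≠ 0) (k m : ℕ) :
    c m (τ ^ k) = if m = k then 1 else 0 := by
  have := coeff_mul_tau_pow h hq 1 k m
  rw [one_mul] at this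
  rw [this]
  by_cases hk : k ≤ m
  · rw [if_pos hk, h.coeff_one]
    by_cases he : m = k
    · rw [if_pos (by omega), if_pos he]
    · rw [if_neg (by omega), if_neg he]
  · rw [if_neg hk, if_neg (by omega)]

theorem coeff_iota_mul_tau_pow (h : IsSkewPolyRing q K R c τ) (hq : q ≠ 0) {ι : K →+* R}
    (hι : ∀ (a : K) (n : ℕ), c n (ι a) = if n = 0 then a else 0)
    (a : K) (k m : ℕ) : c m (ι a * τ ^ k) = if m = k then a else 0 := by
  rw [coeff_mul_tau_pow h hq, hι]
  by_cases hk : k ≤ m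
  · rw [if_pos hk]
    by_cases he : m = k
    · rw [if_pos (by omega), if_pos he]
    · rw [if_neg (by omega), if_neg he]
  · rw [if_neg hk, if_neg (by omega)]

theorem coeff_mul_iota (h : IsSkewPolyRing q K R c τ) (hq : q ≠ 0) {ι : K →+* R}
    (hι : ∀ (a : K) (n : ℕ), c n (ι a) = if n = 0 then a else 0)
    (a : K) (x : R) (m : ℕ) : c m (x * ι a) = c m x * a ^ q ^ m := by
  rw [h.coeff_mul]
  rw [Finset.sum_eq_single m]
  · rw [Nat.sub_self, hι, if_pos rfl]
  · intro i hi hne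
    have : i < m := by have := Finset.mem_range.mp hi; omega
    rw [hι, if_neg (by omega), zero_pow (pow_ne_zero _ hq), mul_zero]
  · intro hm; exact absurd (Finset.mem_range.mpr (by omega)) hm


theorem pow_q_fixed {a : K} (ha : a ^ q = a) : ∀ m, a ^ q ^ m = a := by
  intro m
  induction m with
  | zero => simp
  | succ m ih => rw [pow_succ, pow_mul, ih, ha]

theorem iota_central (h : IsSkewPolyRing q K R c τ) (hq : q ≠ 0) {ι : K →+* R}
    (hι : ∀ (a : K) (n : ℕ), c n (ι a) = if n = 0 then a else 0)
    {a : K} (ha : a ^ q = a) (x : R) : Commute (ι a) x := by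
  show ι a * x = x * ι a
  refine ext h fun m => ?_
  rw [coeff_iota_mul h hι, coeff_mul_iota h hq hι, pow_q_fixed ha, mul_comm]

theorem tau_pow_d_central (h : IsSkewPolyRing q K R c τ) (hq : q ≠ 0) {d : ℕ}
    (hfix : ∀ b : K, b ^ q ^ d = b) (x : R) : Commute (τ ^ d) x := by
  show τ ^ d * x = x * τ ^ d
  refine ext h fun m => ?_
  rw [coeff_tau_pow_mul h hq, coeff_mul_tau_pow h hq]
  by_cases hm : d ≤ m
  · rw [if_pos hm, if_pos hm, hfix]
  · rw [if_neg hm, if_neg hm]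

theorem exists_top (h : IsSkewPolyRing q K R c τ) {x : R} (hx : x ≠ 0) :
    ∃ N, c N x ≠ 0 ∧ ∀ m, N < m → c m x = 0 := by
  have hfin := h.support_finite x
  have hne : hfin.toFinset.Nonempty := by
    rw [Finset.nonempty_iff_ne_empty]
    intro hemp
    refine hx (eq_zero h fun n => ?_)
    by_contra hn
    have : n ∈ hfin.toFinset := by
      rw [Set.Finite.mem_toFinset, Function.mem_support]; exact hn
    rw [hemp] at this; simp at this
  refine ⟨hfin.toFinset.max' hne, ?_, ?_⟩
  · have := hfin.toFinset.max'_mem hne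
    rwa [Set.Finite.mem_toFinset, Function.mem_support] at this
  · intro m hm
    by_contra hm0
    have : m ∈ hfin.toFinset := by
      rw [Set.Finite.mem_toFinset, Function.mem_support]; exact hm0
    exact absurd (Finset.le_max' _ m this) (not_le.mpr hm)

theorem exists_bound (h : IsSkewPolyRing q K R c τ) (x : R) :
    ∃ B, ∀ m, B ≤ m → c m x = 0 := by
  rcases eq_or_ne x 0 with rfl | hx
  · exact ⟨0, fun m _ => map_zero _⟩
  · obtain ⟨N, _, hN⟩ := exists_top h hx
    exact ⟨N + 1, fun m hm => hN m (by omega)⟩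

theorem mul_ne_zero_R (h : IsSkewPolyRing q K R c τ) (hq : q ≠ 0) {x y : R}
    (hx : x ≠ 0) (hy : y ≠ 0) : x * y ≠ 0 := by
  obtain ⟨N, hN, hN'⟩ := exists_top h hx
  obtain ⟨M, hM, hM'⟩ := exists_top h hy
  intro hxy
  have hc : c (N + M) (x * y) = c N x * c M y ^ q ^ N := by
    rw [h.coeff_mul]
    rw [Finset.sum_eq_single N]
    · rw [show N + M - N = M by omega]
    · intro i hi hiN
      rcases lt_or_gt_of_ne hiN with hlt | hgt
      · rw [hM' (N + M - i) (by omega), zero_pow (pow_ne_zero _ hq), mul_zero]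
      · rw [hN' i hgt, zero_mul]
    · intro hmem; exact absurd (Finset.mem_range.mpr (by omega)) hmem
  rw [hxy, map_zero] at hc
  exact absurd hc.symm (mul_ne_zero hN (pow_ne_zero _ hM))

theorem cancel_right (h : IsSkewPolyRing q K R c τ) (hq : q ≠ 0) {x y z : R}
    (hz : z ≠ 0) (hxz : x * z = y * z) : x = y := by
  by_contra hne
  have : (x - y) * z = 0 := by rw [sub_mul, hxz, sub_self]
  exact mul_ne_zero_R h hq (sub_ne_zero.mpr hne) hz this

theorem div_lemma (h : IsSkewPolyRing q K R c τ) (hq : q ≠ 0) {ι : K →+* R}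
    (hι : ∀ (a : K) (n : ℕ), c n (ι a) = if n = 0 then a else 0)
    {H : R} {M : ℕ} (hM : c M H ≠ 0) (hM' : ∀ m, M < m → c m H = 0) :
    ∀ N x, (∀ m, N + M ≤ m → c m x = 0) → ∃ u, ∀ m, M ≤ m → c m (x - u * H) = 0 := by
  intro N
  induction N with
  | zero =>
    intro x hx
    exact ⟨0, fun m hm => by rw [zero_mul, sub_zero]; exact hx m (by omega)⟩
  | succ N ih =>
    intro x hx
    by_cases h0 : c (N + M) x = 0
    · refine ih x fun m hm => ?_
      rcases eq_or_lt_of_le hm with he | hlt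
      · rw [← he]; exact h0
      · exact hx m (by omega)
    · set a := c (N + M) x * (c M H ^ q ^ N)⁻¹ with ha
      have hpow : c M H ^ q ^ N ≠ 0 := pow_ne_zero _ hM
      have key : ∀ m, N + M ≤ m → c m (x - ι a * (τ ^ N * H)) = 0 := by
        intro m hm
        rw [map_sub, coeff_iota_mul h hι, coeff_tau_pow_mul h hq]
        rcases eq_or_lt_of_le hm with he | hlt
        · rw [if_pos (by omega), ← he, show N + M - N = M by omega, ha,
            mul_assoc, inv_mul_cancel₀ hpow, mul_one, sub_self]
        · rw [hx m (by omega), if_pos (by omega), hM' (m - N) (by omega),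
            zero_pow (pow_ne_zero _ hq), mul_zero, sub_self]
      obtain ⟨u, hu⟩ := ih (x - ι a * (τ ^ N * H)) key
      refine ⟨u + ι a * τ ^ N, fun m hm => ?_⟩
      have := hu m hm
      rwa [show x - ι a * (τ ^ N * H) - u * H = x - (u + ι a * τ ^ N) * H by
        rw [add_mul, mul_assoc]; abel] at this

end SkewAux

/-- `F_{q^d}{τ}` is a maximal `F_q[t]`-order (with `t = τ^d`) in the division
algebra `F_{q^d}(τ) = F_{q^d}{τ} ⊗_{F_q[t]} F_q(t)`.  An order in `D` is an
`F_q[t]`-subalgebra which is finitely generated as an `F_q[t]`-module and spans `D` over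
`F_q(t)`; the image `Λ` of `F_{q^d}{τ}` under the canonical map is such an order, and it is
maximal under inclusion among orders. -/
theorem skew_poly_ring_is_maximal_order
    (Fq K R : Type) [Field Fq] [Fintype Fq] [Field K] [Fintype K] [Algebra Fq K] [Ring R]
    (q d : ℕ) (hq : q = Fintype.card Fq) (hd : 0 < d) (hK : Fintype.card K = q ^ d)
    (c : ℕ → R →+ K) (τ : R) (h : IsSkewPolyRing q K R c τ)
    (ι : K →+* R) (hι : ∀ (a : K) (n : ℕ), c n (ι a) = if n = 0 then a else 0)
    [Algebra (Polynomial Fq) R]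
    (halg : ∀ p : Polynomial Fq,
      algebraMap (Polynomial Fq) R p =
        p.sum fun n a => ι (algebraMap Fq K a) * τ ^ (d * n))
    (Λ : Subalgebra (Polynomial Fq) (RatFunc Fq ⊗[Polynomial Fq] R))
    (hΛ : Λ = (Algebra.TensorProduct.includeRight :
        R →ₐ[Polynomial Fq] RatFunc Fq ⊗[Polynomial Fq] R).range) :
    (Subalgebra.toSubmodule Λ).FG ∧
    Submodule.span (RatFunc Fq) (Λ : Set (RatFunc Fq ⊗[Polynomial Fq] R)) = ⊤ ∧
    ∀ Λ' : Subalgebra (Polynomial Fq) (RatFunc Fq ⊗[Polynomial Fq] R),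
      (Subalgebra.toSubmodule Λ').FG →
      Submodule.span (RatFunc Fq) (Λ' : Set (RatFunc Fq ⊗[Polynomial Fq] R)) = ⊤ →
      Λ ≤ Λ' → Λ' = Λ := by
  classical
  have hq0 : q ≠ 0 := by rw [hq]; exact Fintype.card_ne_zero
  have hfixK : ∀ b : K, b ^ q ^ d = b := fun b => by rw [← hK]; exact FiniteField.pow_card b
  have hfixFq : ∀ a : Fq, (algebraMap Fq K a) ^ q = algebraMap Fq K a := fun a => by
    rw [← map_pow, hq, FiniteField.pow_card]
  -- centrality of the image of Fq[t]
  have hcent : ∀ (p : Polynomial Fq) (x : R),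
      Commute (algebraMap (Polynomial Fq) R p) x := by
    intro p x
    rw [halg p, Polynomial.sum]
    refine Commute.sum_left _ _ _ fun n _ => Commute.mul_left ?_ ?_
    · exact SkewAux.iota_central h hq0 hι (hfixFq _) x
    · rw [pow_mul]
      exact (SkewAux.tau_pow_d_central h hq0 hfixK x).pow_left n
  -- coefficients of algebraMap
  have hcoeff_alg : ∀ (p : Polynomial Fq) (n : ℕ),
      c (d*n) (algebraMap (Polynomial Fq) R p) = algebraMap Fq K (p.coeff n) := by
    intro p n
    rw [halg p, Polynomial.sum, map_sum,
      Finset.sum_congr rfl (fun k _ => ?_),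
      Finset.sum_ite_eq' p.support n (fun k => algebraMap Fq K (p.coeff k))]
    · by_cases hn : n ∈ p.support
      · rw [if_pos hn]
      · rw [if_neg hn, Polynomial.notMem_support_iff.mp hn, map_zero]
    · rw [SkewAux.coeff_iota_mul_tau_pow h hq0 hι]
      by_cases he : k = n
      · rw [if_pos (by rw [he]), if_pos he, he]
      · rw [if_neg (fun hdn => he (Nat.eq_of_mul_eq_mul_left hd hdn).symm), if_neg he]
  have halg_inj : ∀ p : Polynomial Fq, algebraMap (Polynomial Fq) R p = 0 → p = 0 := by
    intro p hp
    by_contra hp0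
    have h1 := hcoeff_alg p p.natDegree
    rw [hp, map_zero] at h1
    exact (map_ne_zero_iff _ (algebraMap Fq K).injective).mpr
      (Polynomial.leadingCoeff_ne_zero.mpr hp0) h1.symm
  have hXpow : ∀ k, algebraMap (Polynomial Fq) R (Polynomial.X ^ k) = τ ^ (d * k) := by
    intro k
    rw [map_pow, pow_mul]
    congr 1
    rw [halg Polynomial.X, Polynomial.sum_X_index (by rw [map_zero, map_zero, zero_mul]),
      map_one, map_one, one_mul, mul_one]
  -- spanning set for R
  have hspan : ∀ x : R, x ∈ Submodule.span (Polynomial Fq)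
      (Set.range (fun p : K × Fin d => ι p.1 * τ ^ (p.2 : ℕ))) := by
    set S := Set.range (fun p : K × Fin d => ι p.1 * τ ^ (p.2 : ℕ)) with hS
    suffices H : ∀ N (x : R), (∀ m, N ≤ m → c m x = 0) →
        x ∈ Submodule.span (Polynomial Fq) S by
      intro x
      obtain ⟨B, hB⟩ := SkewAux.exists_bound h x
      exact H B x hB
    intro N
    induction N with
    | zero =>
      intro x hx
      rw [SkewAux.eq_zero h (fun n => hx n (by omega))]
      exact zero_mem _
    | succ N ih =>
      intro x hx
      have hx' : ∀ m, N ≤ m → c m (x - ι (c N x) * τ ^ N) = 0 := by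
        intro m hm
        rw [map_sub, SkewAux.coeff_iota_mul_tau_pow h hq0 hι]
        rcases eq_or_lt_of_le hm with he | hlt
        · rw [if_pos he.symm, ← he, sub_self]
        · rw [if_neg (by omega), hx m (by omega), sub_zero]
      have h2 : ι (c N x) * τ ^ N ∈ Submodule.span (Polynomial Fq) S := by
        have heq : ι (c N x) * τ ^ N =
            (Polynomial.X ^ (N / d) : Polynomial Fq) • (ι (c N x) * τ ^ (N % d)) := by
          rw [Algebra.smul_def, (hcent (Polynomial.X ^ (N/d)) _).eq, hXpow, mul_assoc,
            ← pow_add, Nat.mod_add_div]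
        rw [heq]
        exact Submodule.smul_mem _ _
          (Submodule.subset_span ⟨(c N x, ⟨N % d, Nat.mod_lt _ hd⟩), rfl⟩)
      have h3 : x = (x - ι (c N x) * τ ^ N) + ι (c N x) * τ ^ N := by abel
      rw [h3]; exact add_mem (ih _ hx') h2
  -- injectivity of includeRight
  have hloc : IsLocalizedModule (nonZeroDivisors (Polynomial Fq))
      (TensorProduct.mk (Polynomial Fq) (RatFunc Fq) R 1) :=
    (isLocalizedModule_iff_isBaseChange (nonZeroDivisors (Polynomial Fq)) (RatFunc Fq) _).mpr
      (TensorProduct.isBaseChange _ _ _)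
  have hinj0 : ∀ r : R, (1 : RatFunc Fq) ⊗ₜ[Polynomial Fq] r = 0 → r = 0 := by
    intro r hr
    obtain ⟨s, hs⟩ := (@IsLocalizedModule.eq_zero_iff _ _ (nonZeroDivisors (Polynomial Fq))
      _ _ _ _ _ _ (TensorProduct.mk (Polynomial Fq) (RatFunc Fq) R 1) hloc r).mp hr
    have hs0 : (s : Polynomial Fq) ≠ 0 := nonZeroDivisors.ne_zero s.2
    rw [Submonoid.smul_def, Algebra.smul_def] at hs
    by_contra hr0
    exact SkewAux.mul_ne_zero_R h hq0 (fun h0 => hs0 (halg_inj _ h0)) hr0 hs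
  have hinj : ∀ r r' : R, (1 : RatFunc Fq) ⊗ₜ[Polynomial Fq] r =
      (1 : RatFunc Fq) ⊗ₜ[Polynomial Fq] r' → r = r' := by
    intro r r' hrr
    have : (1 : RatFunc Fq) ⊗ₜ[Polynomial Fq] (r - r') = 0 := by
      rw [TensorProduct.tmul_sub, hrr, sub_self]
    exact sub_eq_zero.mp (hinj0 _ this)
  refine ⟨?_, ?_, ?_⟩
  · -- part 1: FG
    have htop : (⊤ : Submodule (Polynomial Fq) R).FG :=
      Submodule.fg_def.mpr ⟨_, Set.finite_range _,
        Submodule.eq_top_iff'.mpr hspan⟩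
    have hmap : Subalgebra.toSubmodule Λ = Submodule.map
        (Algebra.TensorProduct.includeRight :
          R →ₐ[Polynomial Fq] RatFunc Fq ⊗[Polynomial Fq] R).toLinearMap ⊤ := by
      rw [Submodule.map_top, hΛ]
      ext x
      simp [Subalgebra.mem_toSubmodule, AlgHom.mem_range, LinearMap.mem_range]
    rw [hmap]
    exact htop.map _
  · -- part 2: spanning
    rw [Submodule.eq_top_iff']
    intro x
    induction x using TensorProduct.induction_on with
    | zero => exact zero_mem _
    | tmul p r =>
      have : p ⊗ₜ[Polynomial Fq] r = p • ((1:RatFunc Fq) ⊗ₜ[Polynomial Fq] r) := by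
        rw [TensorProduct.smul_tmul', smul_eq_mul, mul_one]
      rw [this]
      refine Submodule.smul_mem _ _ (Submodule.subset_span ?_)
      rw [SetLike.mem_coe, hΛ]
      exact ⟨r, rfl⟩
    | add a b iha ihb => exact add_mem iha ihb
  · -- part 3: maximality
    intro Λ' hFG hsp hle
    have hdenom : ∀ x : RatFunc Fq ⊗[Polynomial Fq] R, ∃ s : Polynomial Fq, s ≠ 0 ∧
        ∃ r : R, s • x = (1 : RatFunc Fq) ⊗ₜ[Polynomial Fq] r := by
      intro x
      induction x using TensorProduct.induction_on with
      | zero => exact ⟨1, one_ne_zero, 0, by simp⟩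
      | tmul p r =>
        refine ⟨p.denom, p.denom_ne_zero, p.num • r, ?_⟩
        have hmul : (algebraMap (Polynomial Fq) (RatFunc Fq) p.denom) * p
            = algebraMap (Polynomial Fq) (RatFunc Fq) p.num := by
          calc (algebraMap (Polynomial Fq) (RatFunc Fq) p.denom) * p
              = (algebraMap (Polynomial Fq) (RatFunc Fq) p.denom) *
                (algebraMap (Polynomial Fq) (RatFunc Fq) p.num /
                  algebraMap (Polynomial Fq) (RatFunc Fq) p.denom) := by
                rw [RatFunc.num_div_denom]
            _ = algebraMap (Polynomial Fq) (RatFunc Fq) p.num := by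
                rw [mul_div_assoc', mul_comm, mul_div_assoc,
                  div_self (RatFunc.algebraMap_ne_zero p.denom_ne_zero), mul_one]
        calc p.denom • (p ⊗ₜ[Polynomial Fq] r)
            = (p.denom • p) ⊗ₜ[Polynomial Fq] r := TensorProduct.smul_tmul' _ _ _
          _ = (algebraMap (Polynomial Fq) (RatFunc Fq) p.num) ⊗ₜ[Polynomial Fq] r := by
              rw [Algebra.smul_def, hmul]
          _ = (p.num • (1:RatFunc Fq)) ⊗ₜ[Polynomial Fq] r := by
              rw [Algebra.smul_def, mul_one]
          _ = (1:RatFunc Fq) ⊗ₜ[Polynomial Fq] (p.num • r) := TensorProduct.smul_tmul _ _ _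
      | add x y ihx ihy =>
        obtain ⟨s1, hs1, r1, hr1⟩ := ihx
        obtain ⟨s2, hs2, r2, hr2⟩ := ihy
        refine ⟨s1 * s2, mul_ne_zero hs1 hs2, s2 • r1 + s1 • r2, ?_⟩
        have e1 : (s1 * s2) • x = (1:RatFunc Fq) ⊗ₜ[Polynomial Fq] (s2 • r1) := by
          rw [mul_comm, mul_smul, hr1, TensorProduct.tmul_smul]
        have e2 : (s1 * s2) • y = (1:RatFunc Fq) ⊗ₜ[Polynomial Fq] (s1 • r2) := by
          rw [mul_smul, hr2, TensorProduct.tmul_smul]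
        rw [smul_add, e1, e2, TensorProduct.tmul_add]
    obtain ⟨T, hT⟩ := hFG
    choose sfun hs0 rfun hrfun using hdenom
    set f₀ : Polynomial Fq := ∏ t ∈ T, sfun t with hf₀
    have hf0 : f₀ ≠ 0 := Finset.prod_ne_zero_iff.mpr fun t _ => hs0 t
    have Hf : ∀ x ∈ Λ', ∃ r : R, f₀ • x = (1:RatFunc Fq) ⊗ₜ[Polynomial Fq] r := by
      intro x hx
      have hx' : x ∈ Submodule.span (Polynomial Fq) (T : Set (RatFunc Fq ⊗[Polynomial Fq] R)) := by
        rw [hT]; exact hx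
      clear hx
      induction hx' using Submodule.span_induction with
      | mem t ht =>
        refine ⟨(∏ u ∈ T.erase t, sfun u) • rfun t, ?_⟩
        rw [hf₀, ← Finset.mul_prod_erase T sfun (Finset.mem_coe.mp ht), mul_comm, mul_smul,
          hrfun t, TensorProduct.tmul_smul]
      | zero => exact ⟨0, by simp⟩
      | add x y hx1 hy1 ihx ihy =>
        obtain ⟨rx, hrx⟩ := ihx
        obtain ⟨ry, hry⟩ := ihy
        exact ⟨rx + ry, by rw [smul_add, hrx, hry, TensorProduct.tmul_add]⟩
      | smul a x hx1 ihx =>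
        obtain ⟨r, hr⟩ := ihx
        exact ⟨a • r, by rw [smul_comm, hr, TensorProduct.tmul_smul]⟩
    set I : R → Prop := fun r => ∃ y, y ∈ Λ' ∧
      (1:RatFunc Fq) ⊗ₜ[Polynomial Fq] r = f₀ • y with hIdef
    have hIsub : ∀ r r', I r → I r' → I (r - r') := by
      rintro r r' ⟨y, hy, hyr⟩ ⟨y', hy', hyr'⟩
      exact ⟨y - y', sub_mem hy hy', by rw [TensorProduct.tmul_sub, hyr, hyr', smul_sub]⟩
    have hΛ'incl : ∀ w : R, (1:RatFunc Fq) ⊗ₜ[Polynomial Fq] w ∈ Λ' := by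
      intro w
      apply hle
      rw [hΛ]
      exact ⟨w, rfl⟩
    have hIleft : ∀ (w r : R), I r → I (w * r) := by
      rintro w r ⟨y, hy, hyr⟩
      refine ⟨((1:RatFunc Fq) ⊗ₜ[Polynomial Fq] w) * y, mul_mem (hΛ'incl w) hy, ?_⟩
      rw [show (1:RatFunc Fq) ⊗ₜ[Polynomial Fq] (w * r)
          = ((1:RatFunc Fq) ⊗ₜ[Polynomial Fq] w) * ((1:RatFunc Fq) ⊗ₜ[Polynomial Fq] r) by
        rw [Algebra.TensorProduct.tmul_mul_tmul, one_mul], hyr, mul_smul_comm]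
    have hFmem : I (algebraMap (Polynomial Fq) R f₀) := by
      refine ⟨1, one_mem _, ?_⟩
      rw [Algebra.algebraMap_eq_smul_one, TensorProduct.tmul_smul,
        Algebra.TensorProduct.one_def]
    have hF0 : algebraMap (Polynomial Fq) R f₀ ≠ 0 := fun h0 => hf0 (halg_inj _ h0)
    have hDne : ∃ M, ∃ r, I r ∧ r ≠ 0 ∧ c M r ≠ 0 ∧ ∀ m, M < m → c m r = 0 := by
      obtain ⟨N, hN1, hN2⟩ := SkewAux.exists_top h hF0
      exact ⟨N, _, hFmem, hF0, hN1, hN2⟩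
    obtain ⟨H, hHI, hH0, hHM, hHM'⟩ := Nat.find_spec hDne
    have hprinc : ∀ r, I r → ∃ u, r = u * H := by
      intro r hr
      obtain ⟨B, hB⟩ := SkewAux.exists_bound h r
      obtain ⟨u, hu⟩ := SkewAux.div_lemma h hq0 hι hHM hHM' B r (fun m hm => hB m (by omega))
      refine ⟨u, ?_⟩
      have hρI : I (r - u * H) := hIsub _ _ hr (hIleft u H hHI)
      rcases eq_or_ne (r - u * H) 0 with he | hne
      · rw [← sub_eq_zero]; exact he
      · exfalso
        obtain ⟨M', hM'1, hM'2⟩ := SkewAux.exists_top h hne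
        have hlt : M' < Nat.find hDne := by
          by_contra hge
          exact hM'1 (hu M' (le_of_not_gt hge))
        exact Nat.find_min hDne hlt ⟨_, hρI, hne, hM'1, hM'2⟩
    have hIprod : ∀ r r', I r → I r' → ∃ u, I u ∧
        r * r' = algebraMap (Polynomial Fq) R f₀ * u := by
      rintro r r' ⟨y, hy, hyr⟩ ⟨y', hy', hyr'⟩
      obtain ⟨u, hu⟩ := Hf (y * y') (mul_mem hy hy')
      refine ⟨u, ⟨y * y', mul_mem hy hy', hu.symm⟩, ?_⟩
      apply hinj
      calc (1:RatFunc Fq) ⊗ₜ[Polynomial Fq] (r * r')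
          = ((1:RatFunc Fq) ⊗ₜ[Polynomial Fq] r) * ((1:RatFunc Fq) ⊗ₜ[Polynomial Fq] r') := by
            rw [Algebra.TensorProduct.tmul_mul_tmul, one_mul]
        _ = (f₀ • y) * (f₀ • y') := by rw [hyr, hyr']
        _ = f₀ • (f₀ • (y * y')) := by rw [smul_mul_assoc, mul_smul_comm]
        _ = f₀ • ((1:RatFunc Fq) ⊗ₜ[Polynomial Fq] u) := by rw [hu]
        _ = (1:RatFunc Fq) ⊗ₜ[Polynomial Fq] (f₀ • u) := by rw [TensorProduct.tmul_smul]
        _ = (1:RatFunc Fq) ⊗ₜ[Polynomial Fq] (algebraMap (Polynomial Fq) R f₀ * u) := by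
            rw [Algebra.smul_def]
    obtain ⟨u, huI, huHH⟩ := hIprod H H hHI hHI
    obtain ⟨s, hs⟩ := hprinc u huI
    have hHFs : H = algebraMap (Polynomial Fq) R f₀ * s := by
      apply SkewAux.cancel_right h hq0 hH0
      rw [huHH, hs, ← mul_assoc]
    refine le_antisymm ?_ hle
    intro x hx
    obtain ⟨r, hr⟩ := Hf x hx
    have hrI : I r := ⟨x, hx, hr.symm⟩
    obtain ⟨w, hw⟩ := hprinc r hrI
    have hr2 : r = algebraMap (Polynomial Fq) R f₀ * (w * s) := by
      rw [hw, hHFs, ← mul_assoc, ← mul_assoc, (hcent f₀ w).eq]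
    have hxeq : f₀ • x = f₀ • ((1:RatFunc Fq) ⊗ₜ[Polynomial Fq] (w * s)) := by
      rw [hr, hr2, ← Algebra.smul_def, TensorProduct.tmul_smul]
    have h2 : (algebraMap (Polynomial Fq) (RatFunc Fq) f₀) ≠ 0 :=
      RatFunc.algebraMap_ne_zero hf0
    have hcancel : x = (1:RatFunc Fq) ⊗ₜ[Polynomial Fq] (w * s) := by
      have h1 : (algebraMap (Polynomial Fq) (RatFunc Fq) f₀) • x =
          (algebraMap (Polynomial Fq) (RatFunc Fq) f₀) •
            ((1:RatFunc Fq) ⊗ₜ[Polynomial Fq] (w * s)) := by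
        rw [algebraMap_smul, algebraMap_smul]; exact hxeq
      calc x = (algebraMap (Polynomial Fq) (RatFunc Fq) f₀)⁻¹ •
            ((algebraMap (Polynomial Fq) (RatFunc Fq) f₀) • x) := (inv_smul_smul₀ h2 x).symm
        _ = (1:RatFunc Fq) ⊗ₜ[Polynomial Fq] (w * s) := by rw [h1, inv_smul_smul₀ h2]
    rw [hcancel, hΛ]
    exact ⟨w * s, rfl⟩
end

section
/- For any x ∈ F_{q^d}^×, the reduced norm of the element 1 − x^{1−q}τ in the division algebra F_{q^d}(τ) over F_q(t) equals 1 − t, where t = τ^d. -/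
/-!
The matrix is `1 - N`, where `N` is the weighted cyclic shift `eᵢ ↦ cᵢ eᵢ₊₁ (mod d)` with weights
`cᵢ = x^(qⁱ - qⁱ⁺¹)`, the wrap-around weight carrying an extra factor `t`. Expanding along the
first column leaves two triangular minors, so `det (1 - N) = 1 - ∏ cᵢ`. The weights telescope to
`t · x / x^(q^d)`, which is `t` since `x^(q^d) = x` in a field with `q^d` elements.
-/

open Finset Polynomial

theorem Fin.eq_add_one_iff_val {n : ℕ} {i j : Fin (n + 1)} :
    j = i + 1 ↔ (j : ℕ) = i + 1 ∨ (i : ℕ) = n ∧ (j : ℕ) = 0 := by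
  simp only [Fin.ext_iff, Fin.val_add_one, Fin.val_last]
  split_ifs <;> omega

namespace Matrix

variable {R : Type*} [CommRing R]

def weightedCyclicShift {n : ℕ} (c : Fin (n + 1) → R) : Matrix (Fin (n + 1)) (Fin (n + 1)) R :=
  of fun i j => if j = i + 1 then c i else 0

variable {n : ℕ} (c : Fin (n + 1) → R)

theorem one_sub_weightedCyclicShift_apply (i j : Fin (n + 1)) :
    (1 - weightedCyclicShift c) i j =
      (if (i : ℕ) = j then 1 else 0) -
        if (j : ℕ) = i + 1 ∨ (i : ℕ) = n ∧ (j : ℕ) = 0 then c i else 0 := by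
  simp only [sub_apply, one_apply, weightedCyclicShift, of_apply, Fin.eq_add_one_iff_val,
    Fin.val_inj]

theorem det_one_sub_weightedCyclicShift_submatrix_succ_succ :
    ((1 - weightedCyclicShift c).submatrix Fin.succ Fin.succ).det = 1 := by
  rw [det_of_isUpperTriangular]
  · refine prod_eq_one fun i _ => ?_
    rw [submatrix_apply, one_sub_weightedCyclicShift_apply, Fin.val_succ, if_pos rfl,
      if_neg (by omega), sub_zero]
  · intro i j (hji : j < i)
    rw [submatrix_apply, one_sub_weightedCyclicShift_apply, Fin.val_succ, Fin.val_succ,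
      if_neg (by omega), if_neg (by omega), sub_zero]

theorem det_one_sub_weightedCyclicShift_submatrix_castSucc_succ :
    ((1 - weightedCyclicShift c).submatrix Fin.castSucc Fin.succ).det =
      ∏ i : Fin n, -c i.castSucc := by
  rw [det_of_isLowerTriangular]
  · refine prod_congr rfl fun i _ => ?_
    rw [submatrix_apply, one_sub_weightedCyclicShift_apply, Fin.val_succ, Fin.val_castSucc,
      if_neg (by omega), if_pos (by omega), zero_sub]
  · intro i j (hij : i < j)
    rw [submatrix_apply, one_sub_weightedCyclicShift_apply, Fin.val_succ, Fin.val_castSucc,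
      if_neg (by omega), if_neg (by omega), sub_zero]

theorem det_one_sub_weightedCyclicShift : (1 - weightedCyclicShift c).det = 1 - ∏ i, c i := by
  -- Column 0 has `1` in row 0 and `-c (last n)` in the last row (both in the same entry if `n = 0`).
  have hcol (i : Fin (n + 1)) : (1 - weightedCyclicShift c) i 0 =
      (if i = 0 then 1 else 0) - if i = Fin.last n then c i else 0 := by
    rw [one_sub_weightedCyclicShift_apply, Fin.val_zero]
    congr 2 <;> apply propext <;> simp only [Fin.ext_iff, Fin.val_last, Fin.val_zero, and_true]
    omega
  rw [det_succ_column_zero]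
  simp only [hcol, mul_sub, sub_mul, mul_ite, ite_mul, mul_zero, zero_mul, sum_sub_distrib,
    sum_ite_eq', mem_univ, if_true]
  rw [Fin.succAbove_zero, Fin.succAbove_last, det_one_sub_weightedCyclicShift_submatrix_succ_succ,
    det_one_sub_weightedCyclicShift_submatrix_castSucc_succ, prod_neg, card_univ, Fintype.card_fin,
    Fin.prod_univ_castSucc, Fin.val_zero, Fin.val_last, pow_zero]
  have hsign : ((-1 : R) ^ n) * (-1) ^ n = 1 := by rw [← mul_pow]; simp
  linear_combination (-c (Fin.last n) * ∏ i : Fin n, c i.castSucc) * hsign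

theorem of_bidiagonal_corner_eq_one_sub_weightedCyclicShift (a : ℕ → R) (t : R) :
    (of fun i j : Fin (n + 1) =>
        (if j = i then (1 : R) else 0) +
        (if (j : ℕ) = (i : ℕ) + 1 then -a i else 0) +
        (if (i : ℕ) = n ∧ (j : ℕ) = 0 then -t * a n else 0)) =
      1 - weightedCyclicShift fun i => (if i = Fin.last n then t else 1) * a i := by
  ext i j
  rw [one_sub_weightedCyclicShift_apply, of_apply]
  have hdiag : j = i ↔ (i : ℕ) = j := by rw [Fin.ext_iff, eq_comm]
  have hlast : i = Fin.last n ↔ (i : ℕ) = n := by rw [Fin.ext_iff, Fin.val_last]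
  simp only [hdiag]
  by_cases hsup : (j : ℕ) = i + 1
  · have hi : (i : ℕ) ≠ n := by omega
    rw [if_neg (show (i : ℕ) ≠ j by omega), if_pos hsup, if_neg (fun h => hi h.1),
      if_pos (Or.inl hsup), if_neg (mt hlast.1 hi)]
    ring
  by_cases hcorner : (i : ℕ) = n ∧ (j : ℕ) = 0
  · rw [if_neg hsup, if_pos hcorner, if_pos (Or.inr hcorner), if_pos (hlast.2 hcorner.1),
      hcorner.1]
    ring
  · rw [if_neg hsup, if_neg hcorner, if_neg (not_or.2 ⟨hsup, hcorner⟩)]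
    ring

theorem det_of_bidiagonal_corner (a : ℕ → R) (t : R) :
    (of fun i j : Fin (n + 1) =>
        (if j = i then (1 : R) else 0) +
        (if (j : ℕ) = (i : ℕ) + 1 then -a i else 0) +
        (if (i : ℕ) = n ∧ (j : ℕ) = 0 then -t * a n else 0)).det =
      1 - t * ∏ i ∈ range (n + 1), a i := by
  rw [of_bidiagonal_corner_eq_one_sub_weightedCyclicShift, det_one_sub_weightedCyclicShift,
    prod_mul_distrib, prod_ite_eq', if_pos (mem_univ _), Fin.prod_univ_eq_prod_range a]

end Matrix

theorem prod_range_zpow_pow_sub_pow {G₀ : Type*} [CommGroupWithZero G₀] {x : G₀} (hx : x ≠ 0)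
    (q m : ℕ) : ∏ i ∈ range m, x ^ ((q : ℤ) ^ i - (q : ℤ) ^ (i + 1)) = x / x ^ q ^ m := by
  induction m with
  | zero => simp [hx]
  | succ m ih =>
    rw [prod_range_succ, ih, zpow_sub₀ hx, ← Nat.cast_pow, ← Nat.cast_pow, zpow_natCast,
      zpow_natCast, div_mul_div_cancel₀ (pow_ne_zero _ hx)]

theorem reduced_norm_one_sub_pow_tau_general
    (Fqd : Type) [Field Fqd] [Fintype Fqd]
    (q d : ℕ) (hd : 0 < d) (hqd : Fintype.card Fqd = q ^ d)
    (x : Fqd) (hx : x ≠ 0) :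
    (Matrix.of fun i j : Fin d =>
        (if j = i then (1 : Polynomial Fqd) else 0) +
        (if (j : ℕ) = (i : ℕ) + 1 then
            -Polynomial.C (x ^ ((q : ℤ) ^ (i : ℕ) - (q : ℤ) ^ ((i : ℕ) + 1))) else 0) +
        (if (i : ℕ) = d - 1 ∧ (j : ℕ) = 0 then
            -Polynomial.X * Polynomial.C (x ^ ((q : ℤ) ^ (d - 1) - (q : ℤ) ^ d)) else 0)).det =
      1 - Polynomial.X := by
  obtain ⟨n, rfl⟩ := Nat.exists_eq_add_one_of_ne_zero hd.ne'
  rw [Nat.add_sub_cancel]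
  refine (Matrix.det_of_bidiagonal_corner
    (fun i => C (x ^ ((q : ℤ) ^ i - (q : ℤ) ^ (i + 1)))) X).trans ?_
  rw [← map_prod, prod_range_zpow_pow_sub_pow hx, ← hqd, FiniteField.pow_card, div_self hx, map_one,
    mul_one]

/-- For `x ∈ F_{q^d}^×`, the reduced norm of `1 − x^{1−q} τ` in the division
algebra `F_{q^d}(τ)` over `F_q(t)` equals `1 − t`.  Following the paper, the reduced norm is
computed as the determinant of the left-multiplication matrix in the basis `1, τ, …, τ^{d-1}`:
the `d × d` matrix with `1` on the diagonal, `−x^{q^i − q^{i+1}}` just above the diagonal, and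
`−t·x^{q^{d-1} − q^d}` in the lower-left corner.  We state the resulting determinant identity
over `F_{q^d}[t]` (with `t = X`). -/
theorem reduced_norm_one_sub_pow_tau
    (Fq Fqd : Type) [Field Fq] [Fintype Fq] [Field Fqd] [Fintype Fqd] [Algebra Fq Fqd]
    (q d : ℕ) (hq : q = Fintype.card Fq) (hd : 0 < d) (hqd : Fintype.card Fqd = q ^ d)
    (x : Fqd) (hx : x ≠ 0) :
    (Matrix.of fun i j : Fin d =>
        (if j = i then (1 : Polynomial Fqd) else 0) +
        (if (j : ℕ) = (i : ℕ) + 1 then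
            -Polynomial.C (x ^ ((q : ℤ) ^ (i : ℕ) - (q : ℤ) ^ ((i : ℕ) + 1))) else 0) +
        (if (i : ℕ) = d - 1 ∧ (j : ℕ) = 0 then
            -Polynomial.X * Polynomial.C (x ^ ((q : ℤ) ^ (d - 1) - (q : ℤ) ^ d)) else 0)).det =
      1 - Polynomial.X :=
  reduced_norm_one_sub_pow_tau_general Fqd q d hd hqd x hx
end
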